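/- arXiv:1802.00116 — 2 statements merged into one kernel-verified Lean document; each statement's English description precedes it below -/
import Mathlib

section
/- Let A_0, A_1 be m×m complex matrices with A_0 upper triangular and A_1 lower triangular, each having m distinct diagonal entries (eigenvalues). If g ∈ GL(m, ℂ) is such that g A_0 g⁻¹ is upper triangular, g A_1 g⁻¹ is lower triangular, and the diagonal entries of g A_0 g⁻¹ and g A_1 g⁻¹ appear in the same order as those of A_0 and A_1 respectively, then g is a diagonal matrix. -/
open Matrix

/-- If `h * A = B * h` with `A`, `B` upper triangular, same diagonal, and the diagonal
entries of `A` are pairwise distinct, then `h` is upper triangular. -/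
lemma gauge_aux (m : ℕ) (A B h : Matrix (Fin m) (Fin m) ℂ)
    (hA : ∀ i j : Fin m, j < i → A i j = 0)
    (hB : ∀ i j : Fin m, j < i → B i j = 0)
    (hdiag : ∀ i : Fin m, B i i = A i i)
    (hinj : Function.Injective fun i : Fin m => A i i)
    (heq : h * A = B * h) :
    ∀ i j : Fin m, j < i → h i j = 0 := by
  suffices H : ∀ n : ℕ, ∀ i j : Fin m, (j : ℕ) + (m - (i : ℕ)) ≤ n → j < i → h i j = 0 by
    exact fun i j hij => H _ i j le_rfl hij
  intro n
  induction n with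
  | zero =>
    intro i j hle _
    exact absurd hle (by have := i.2; omega)
  | succ n ih =>
    intro i j hle hij
    have key := congrFun (congrFun heq i) j
    simp only [Matrix.mul_apply] at key
    have hl : ∑ k, h i k * A k j = h i j * A j j := by
      apply Finset.sum_eq_single_of_mem j (Finset.mem_univ j)
      intro k _ hkj
      rcases lt_or_gt_of_ne hkj with hk | hk
      · have hk0 : h i k = 0 := by
          apply ih i k
          · have : (k : ℕ) < (j : ℕ) := hk
            omega
          · exact hk.trans hij
        simp [hk0]
      · simp [hA k j hk]
    have hr : ∑ k, B i k * h k j = B i i * h i j := by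
      apply Finset.sum_eq_single_of_mem i (Finset.mem_univ i)
      intro k _ hki
      rcases lt_or_gt_of_ne hki with hk | hk
      · simp [hB i k hk]
      · have hk0 : h k j = 0 := by
          apply ih k j
          · have h1 : (i : ℕ) < (k : ℕ) := hk
            have h2 : (k : ℕ) < m := k.2
            omega
          · exact hij.trans hk
        simp [hk0]
    rw [hl, hr, hdiag i] at key
    have hne : A j j ≠ A i i := fun hc => (hij.ne (hinj hc)).elim
    have : h i j * (A j j - A i i) = 0 := by ring_nf; linear_combination key
    rcases mul_eq_zero.mp this with h0 | h0
    · exact h0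
    · exact absurd (sub_eq_zero.mp h0) hne

/-- Proposition (gauge freedom): if `g` conjugates an upper triangular matrix `A₀` with
distinct diagonal entries to an upper triangular matrix with the same diagonal in the same
order, and a lower triangular `A₁` with distinct diagonal entries to a lower triangular
matrix with the same diagonal in the same order, then `g` is diagonal. -/
theorem gauge_freedom (m : ℕ) (A0 A1 : Matrix (Fin m) (Fin m) ℂ)
    (hA0 : ∀ i j : Fin m, j < i → A0 i j = 0)
    (hA1 : ∀ i j : Fin m, i < j → A1 i j = 0)
    (hd0 : Function.Injective fun i : Fin m => A0 i i)
    (hd1 : Function.Injective fun i : Fin m => A1 i i)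
    (g : GL (Fin m) ℂ)
    (h0 : ∀ i j : Fin m, j < i →
      ((g : Matrix (Fin m) (Fin m) ℂ) * A0 * (↑g⁻¹ : Matrix (Fin m) (Fin m) ℂ)) i j = 0)
    (h1 : ∀ i j : Fin m, i < j →
      ((g : Matrix (Fin m) (Fin m) ℂ) * A1 * (↑g⁻¹ : Matrix (Fin m) (Fin m) ℂ)) i j = 0)
    (hdiag0 : ∀ i : Fin m,
      ((g : Matrix (Fin m) (Fin m) ℂ) * A0 * (↑g⁻¹ : Matrix (Fin m) (Fin m) ℂ)) i i = A0 i i)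
    (hdiag1 : ∀ i : Fin m,
      ((g : Matrix (Fin m) (Fin m) ℂ) * A1 * (↑g⁻¹ : Matrix (Fin m) (Fin m) ℂ)) i i = A1 i i) :
    ∀ i j : Fin m, i ≠ j → (g : Matrix (Fin m) (Fin m) ℂ) i j = 0 := by
  set G : Matrix (Fin m) (Fin m) ℂ := (g : Matrix (Fin m) (Fin m) ℂ) with hG
  set Gi : Matrix (Fin m) (Fin m) ℂ := (↑g⁻¹ : Matrix (Fin m) (Fin m) ℂ) with hGi
  have hGiG : Gi * G = 1 := by
    rw [hG, hGi]
    exact_mod_cast g.inv_mul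
  set B0 : Matrix (Fin m) (Fin m) ℂ := G * A0 * Gi with hB0
  set B1 : Matrix (Fin m) (Fin m) ℂ := G * A1 * Gi with hB1
  have heq0 : G * A0 = B0 * G := by
    rw [hB0, Matrix.mul_assoc, Matrix.mul_assoc, hGiG, Matrix.mul_one]
  have heq1 : G * A1 = B1 * G := by
    rw [hB1, Matrix.mul_assoc, Matrix.mul_assoc, hGiG, Matrix.mul_one]
  -- lower part of G vanishes
  have lower : ∀ i j : Fin m, j < i → G i j = 0 :=
    gauge_aux m A0 B0 G hA0 h0 hdiag0 hd0 heq0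
  -- upper part of G vanishes: transpose argument
  have upper : ∀ i j : Fin m, i < j → G i j = 0 := by
    have heqT : Gᵀ * B1ᵀ = A1ᵀ * Gᵀ := by
      have := congrArg Matrix.transpose heq1
      rw [Matrix.transpose_mul, Matrix.transpose_mul] at this
      exact this.symm
    have hdinj : Function.Injective fun i : Fin m => B1ᵀ i i := by
      have : (fun i : Fin m => B1ᵀ i i) = fun i : Fin m => A1 i i := by
        funext i
        simp [Matrix.transpose_apply, hdiag1 i]
      rw [this]; exact hd1
    have key := gauge_aux m B1ᵀ A1ᵀ Gᵀ
      (fun i j hij => by simpa [Matrix.transpose_apply] using h1 j i hij)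
      (fun i j hij => by simpa [Matrix.transpose_apply] using hA1 j i hij)
      (fun i => by simp [Matrix.transpose_apply, hdiag1 i])
      hdinj heqT
    intro i j hij
    simpa [Matrix.transpose_apply] using key j i hij
  intro i j hij
  rcases lt_or_gt_of_ne hij with h | h
  · exact upper i j h
  · exact lower i j h
end

section
/- Let λ, μ ∈ ℂ, b, c ∈ ℂ^{m-1}, and let B, C ∈ M(m-1, ℂ) with B upper triangular and C lower triangular. Assume λ is not an eigenvalue of B and μ is not an eigenvalue of C. Set A_0 = [[λ, 0], [b, B]] (block form, so A_0 is lower-triangular except for the vector b in the first column block) and A_1 = [[μ, cᵀ], [0, C]]. Suppose the m×m matrix [[1, cᵀ(μ−C)⁻¹],[0, I]] · [[1, 0],[(λ−B)⁻¹ b, I]] admits an LU decomposition [[l₁, 0],[l, L₂₂]] · [[u₁, uᵀ],[0, U₂₂]] with L₂₂ lower triangular, U₂₂ upper triangular, l₁ ≠ 0, and U₂₂ invertible. Define G = (l₁⁻¹ ⊕ U₂₂) · [[1, cᵀ(μ−C)⁻¹],[−(λ−B)⁻¹ b, I]]. Then G A_0 G⁻¹ = [[λ, −l₁⁻¹ cᵀ(μ−C)⁻¹(λ−B)U₂₂⁻¹],[0,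 U₂₂ B U₂₂⁻¹]] and G A_1 G⁻¹ = [[μ, 0],[−u₁⁻¹ L₂₂⁻¹(μ−C)(λ−B)⁻¹ b, L₂₂⁻¹ C L₂₂]]; in particular G A_0 G⁻¹ is upper triangular and G A_1 G⁻¹ is lower triangular. -/
open Matrix

/-!
Write `S = (λ - B)⁻¹ b`, `T = cᵀ (μ - C)⁻¹`, `E = [[1, 0], [S, 1]]` and `F = [[1, T], [0, 1]]`.
Then `E` conjugates `λ ⊕ B` to `A₀` and `F` conjugates `A₁` to `μ ⊕ C`, and the hypothesis is
`F E = L U`. Comparing blocks shows `G E = U`, hence also `L G = F`, i.e. `G = U E⁻¹ = L⁻¹ F`.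
So `G A₀ G⁻¹ = U (λ ⊕ B) U⁻¹` and `G A₁ G⁻¹ = L⁻¹ (μ ⊕ C) L`, which are block upper resp. lower
triangular with the stated blocks. Since `det (F E) = 1`, all of `L`, `U`, `l₁`, `u₁`, `L₂₂`, `U₂₂`
are invertible.
-/

section Monoid

variable {M : Type*} [Monoid M]

theorem SemiconjBy.of_mul_eq_of_isUnit {X E Y A D N : M} (hE : IsUnit E) (hXE : X * E = Y)
    (hA : SemiconjBy E D A) (hY : SemiconjBy Y D N) : SemiconjBy X A N :=
  hE.mul_right_cancel <| calc
    X * A * E = X * E * D := by rw [mul_assoc, ← hA.eq, mul_assoc]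
    _ = N * X * E := by rw [hXE, hY.eq, ← hXE, mul_assoc]

theorem SemiconjBy.of_isUnit_mul_eq {W X F A D N : M} (hW : IsUnit W) (hWX : W * X = F)
    (hF : SemiconjBy F A D) (hN : SemiconjBy W N D) : SemiconjBy X A N :=
  hW.mul_left_cancel <| calc
    W * (X * A) = D * (W * X) := by rw [← mul_assoc, hWX, hF.eq]
    _ = W * (N * X) := by rw [← mul_assoc, ← hN.eq, mul_assoc]

end Monoid

namespace Matrix

variable {m n α : Type*} [Fintype m] [Fintype n] [DecidableEq m] [DecidableEq n]

theorem mul_mul_nonsing_inv_of_semiconjBy [CommRing α] {X A N : Matrix n n α} (hX : IsUnit X.det)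
    (h : SemiconjBy X A N) : X * A * X⁻¹ = N := by
  rw [h.eq, mul_nonsing_inv_cancel_right _ _ hX]

section CommRing

variable [CommRing α]

theorem semiconjBy_fromBlocks_unitLower {a : α} {b S : Matrix n m α} {B : Matrix n n α}
    (hS : (a • 1 - B) * S = b) :
    SemiconjBy (fromBlocks (1 : Matrix m m α) 0 S 1) (fromBlocks (a • (1 : Matrix m m α)) 0 0 B)
      (fromBlocks (a • (1 : Matrix m m α)) 0 b B) := by
  rw [SemiconjBy, fromBlocks_multiply, fromBlocks_multiply, ← hS]
  simp only [Matrix.mul_one, Matrix.one_mul, Matrix.mul_zero, Matrix.zero_mul, add_zero,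
    zero_add, Matrix.sub_mul, Matrix.mul_smul, Matrix.smul_mul]
  congr 1
  abel

theorem semiconjBy_fromBlocks_unitUpper {a : α} {c T : Matrix m n α} {C : Matrix n n α}
    (hT : T * (a • 1 - C) = c) :
    SemiconjBy (fromBlocks (1 : Matrix m m α) T 0 1) (fromBlocks (a • (1 : Matrix m m α)) c 0 C)
      (fromBlocks (a • (1 : Matrix m m α)) 0 0 C) := by
  rw [SemiconjBy, fromBlocks_multiply, fromBlocks_multiply, ← hT]
  simp only [Matrix.mul_one, Matrix.one_mul, Matrix.mul_zero, Matrix.zero_mul, add_zero,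
    zero_add, Matrix.mul_sub, Matrix.mul_smul, Matrix.smul_mul, smul_zero]
  congr 1 <;> abel

theorem semiconjBy_fromBlocks_upper (a u : α) (v : Matrix m n α) {B U : Matrix n n α}
    (hU : IsUnit U.det) :
    SemiconjBy (fromBlocks (u • (1 : Matrix m m α)) v 0 U)
      (fromBlocks (a • (1 : Matrix m m α)) 0 0 B)
      (fromBlocks (a • (1 : Matrix m m α)) (-(v * (a • 1 - B) * U⁻¹)) 0 (U * B * U⁻¹)) := by
  rw [SemiconjBy, fromBlocks_multiply, fromBlocks_multiply]
  simp only [Matrix.mul_one, Matrix.one_mul, Matrix.mul_zero, Matrix.zero_mul, add_zero,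
    zero_add, Matrix.neg_mul, nonsing_inv_mul_cancel_right _ _ hU, Matrix.mul_sub,
    Matrix.mul_smul, Matrix.smul_mul, smul_smul, mul_comm a u, smul_zero]
  congr 1
  abel

theorem semiconjBy_fromBlocks_lower (a l : α) (w : Matrix n m α) {C L : Matrix n n α}
    (hL : IsUnit L.det) :
    SemiconjBy (fromBlocks (l • (1 : Matrix m m α)) 0 w L)
      (fromBlocks (a • (1 : Matrix m m α)) 0 (-(L⁻¹ * (a • 1 - C) * w)) (L⁻¹ * C * L))
      (fromBlocks (a • (1 : Matrix m m α)) 0 0 C) := by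
  rw [SemiconjBy, fromBlocks_multiply, fromBlocks_multiply]
  simp only [Matrix.mul_one, Matrix.one_mul, Matrix.mul_zero, Matrix.zero_mul, add_zero,
    zero_add, Matrix.mul_neg, ← Matrix.mul_assoc, mul_nonsing_inv _ hL, Matrix.sub_mul,
    Matrix.mul_smul, Matrix.smul_mul, smul_smul, mul_comm a l, smul_zero]
  congr 1 <;> abel

theorem det_fromBlocks_unitUpper_mul_unitLower (T : Matrix m n α) (S : Matrix n m α) :
    (fromBlocks (1 : Matrix m m α) T 0 1 * fromBlocks 1 0 S 1).det = 1 := by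
  rw [det_mul, det_fromBlocks_zero₂₁, det_fromBlocks_zero₁₂]
  simp

theorem isUnit_det_fromBlocks_smul_one_zero₁₂_iff [Nonempty m] (l : α) (w : Matrix n m α)
    (L : Matrix n n α) :
    IsUnit (fromBlocks (l • (1 : Matrix m m α)) 0 w L).det ↔ IsUnit l ∧ IsUnit L.det := by
  rw [det_fromBlocks_zero₁₂, det_smul, det_one, mul_one, IsUnit.mul_iff,
    isUnit_pow_iff Fintype.card_ne_zero]

theorem isUnit_det_fromBlocks_smul_one_zero₂₁_iff [Nonempty m] (u : α) (v : Matrix m n α)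
    (U : Matrix n n α) :
    IsUnit (fromBlocks (u • (1 : Matrix m m α)) v 0 U).det ↔ IsUnit u ∧ IsUnit U.det := by
  rw [det_fromBlocks_zero₂₁, det_smul, det_one, mul_one, IsUnit.mul_iff,
    isUnit_pow_iff Fintype.card_ne_zero]

end CommRing

section Field

variable [Field α] {T v : Matrix m n α} {S w : Matrix n m α} {L U : Matrix n n α} {l u : α}

theorem eq_of_fromBlocks_unitUpper_mul_unitLower_eq
    (hLU : fromBlocks (1 : Matrix m m α) T 0 1 * fromBlocks 1 0 S 1 =
      fromBlocks (l • 1) 0 w L * fromBlocks (u • 1) v 0 U) :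
    (l * u) • 1 = 1 + T * S ∧ l • v = T ∧ u • w = S := by
  simp only [fromBlocks_multiply, fromBlocks_inj, Matrix.mul_one, Matrix.one_mul, Matrix.mul_zero,
    Matrix.zero_mul, add_zero, zero_add, Matrix.smul_mul, Matrix.mul_smul, smul_smul] at hLU
  exact ⟨mul_comm l u ▸ hLU.1.symm, hLU.2.1.symm, hLU.2.2.1.symm⟩

theorem fromBlocks_gauge_mul_unitLower (hl : l ≠ 0) (h₁₁ : (l * u) • 1 = 1 + T * S)
    (h₁₂ : l • v = T) :
    fromBlocks (l⁻¹ • (1 : Matrix m m α)) 0 0 U * fromBlocks 1 T (-S) 1 * fromBlocks 1 0 S 1 =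
      fromBlocks (u • 1) v 0 U := by
  have hTS : fromBlocks (1 : Matrix m m α) T (-S) 1 * fromBlocks 1 0 S 1 =
      fromBlocks (1 + T * S) T 0 1 := by
    simp [fromBlocks_multiply]
  rw [Matrix.mul_assoc, hTS, fromBlocks_multiply, ← h₁₁, ← h₁₂]
  simp [smul_smul, mul_comm l u, hl]

end Field

end Matrix

theorem LU_gauge_general (k : ℕ) (lam mu : ℂ)
    (b : Matrix (Fin k) (Fin 1) ℂ) (cT : Matrix (Fin 1) (Fin k) ℂ)
    (B C : Matrix (Fin k) (Fin k) ℂ)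
    (hlamB : IsUnit (lam • (1 : Matrix (Fin k) (Fin k) ℂ) - B))
    (hmuC : IsUnit (mu • (1 : Matrix (Fin k) (Fin k) ℂ) - C))
    (l1 u1 : ℂ) (lv : Matrix (Fin k) (Fin 1) ℂ) (uT : Matrix (Fin 1) (Fin k) ℂ)
    (L22 U22 : Matrix (Fin k) (Fin k) ℂ)
    (hLU : fromBlocks (1 : Matrix (Fin 1) (Fin 1) ℂ)
          (cT * (mu • (1 : Matrix (Fin k) (Fin k) ℂ) - C)⁻¹) 0 1 *
        fromBlocks (1 : Matrix (Fin 1) (Fin 1) ℂ) 0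
          ((lam • (1 : Matrix (Fin k) (Fin k) ℂ) - B)⁻¹ * b) 1 =
        fromBlocks (l1 • (1 : Matrix (Fin 1) (Fin 1) ℂ)) 0 lv L22 *
        fromBlocks (u1 • (1 : Matrix (Fin 1) (Fin 1) ℂ)) uT 0 U22)
    (A0 A1 G : Matrix (Fin 1 ⊕ Fin k) (Fin 1 ⊕ Fin k) ℂ)
    (hA0 : A0 = fromBlocks (lam • (1 : Matrix (Fin 1) (Fin 1) ℂ)) 0 b B)
    (hA1 : A1 = fromBlocks (mu • (1 : Matrix (Fin 1) (Fin 1) ℂ)) cT 0 C)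
    (hG : G = fromBlocks (l1⁻¹ • (1 : Matrix (Fin 1) (Fin 1) ℂ)) 0 0 U22 *
        fromBlocks (1 : Matrix (Fin 1) (Fin 1) ℂ)
          (cT * (mu • (1 : Matrix (Fin k) (Fin k) ℂ) - C)⁻¹)
          (-((lam • (1 : Matrix (Fin k) (Fin k) ℂ) - B)⁻¹ * b)) 1) :
    G * A0 * G⁻¹ =
      fromBlocks (lam • (1 : Matrix (Fin 1) (Fin 1) ℂ))
        (-(l1⁻¹ • (cT * (mu • (1 : Matrix (Fin k) (Fin k) ℂ) - C)⁻¹ *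
            (lam • (1 : Matrix (Fin k) (Fin k) ℂ) - B) * U22⁻¹)))
        0 (U22 * B * U22⁻¹) ∧
    G * A1 * G⁻¹ =
      fromBlocks (mu • (1 : Matrix (Fin 1) (Fin 1) ℂ)) 0
        (-(u1⁻¹ • (L22⁻¹ * (mu • (1 : Matrix (Fin k) (Fin k) ℂ) - C) *
            (lam • (1 : Matrix (Fin k) (Fin k) ℂ) - B)⁻¹ * b)))
        (L22⁻¹ * C * L22) := by
  subst hA0 hA1
  obtain ⟨h₁₁, h₁₂, h₂₁⟩ := eq_of_fromBlocks_unitUpper_mul_unitLower_eq hLU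
  have hdet := congrArg det hLU
  rw [det_fromBlocks_unitUpper_mul_unitLower, det_mul, eq_comm] at hdet
  have hL := IsUnit.of_mul_eq_one _ hdet
  have hU := IsUnit.of_mul_eq_one_right _ hdet
  obtain ⟨hl1, hL22⟩ := (isUnit_det_fromBlocks_smul_one_zero₁₂_iff _ _ _).1 hL
  obtain ⟨hu1, hU22⟩ := (isUnit_det_fromBlocks_smul_one_zero₂₁_iff _ _ _).1 hU
  have hE : IsUnit (fromBlocks 1 0 ((lam • 1 - B)⁻¹ * b) 1 :
      Matrix (Fin 1 ⊕ Fin k) (Fin 1 ⊕ Fin k) ℂ) := by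
    simp [isUnit_iff_isUnit_det]
  have hGE := hG ▸ fromBlocks_gauge_mul_unitLower hl1.ne_zero h₁₁ h₁₂ (U := U22)
  have hLG : fromBlocks (l1 • 1) 0 lv L22 * G = fromBlocks 1 (cT * (mu • 1 - C)⁻¹) 0 1 :=
    hE.mul_right_cancel (by rw [Matrix.mul_assoc, hGE, ← hLU])
  have hGdet : IsUnit G.det :=
    isUnit_of_mul_isUnit_left (x := G.det) (by rw [← det_mul, hGE]; exact hU)
  have hRS := mul_nonsing_inv_cancel_left _ b ((isUnit_iff_isUnit_det _).1 hlamB)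
  have hTQ := nonsing_inv_mul_cancel_right _ cT ((isUnit_iff_isUnit_det _).1 hmuC)
  have huT : uT = l1⁻¹ • (cT * (mu • (1 : Matrix (Fin k) (Fin k) ℂ) - C)⁻¹) := by
    rw [← h₁₂, inv_smul_smul₀ hl1.ne_zero]
  have hlv : lv = u1⁻¹ • ((lam • (1 : Matrix (Fin k) (Fin k) ℂ) - B)⁻¹ * b) := by
    rw [← h₂₁, inv_smul_smul₀ hu1.ne_zero]
  refine ⟨mul_mul_nonsing_inv_of_semiconjBy hGdet ?_, mul_mul_nonsing_inv_of_semiconjBy hGdet ?_⟩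
  · have h := SemiconjBy.of_mul_eq_of_isUnit hE hGE (semiconjBy_fromBlocks_unitLower hRS)
      (semiconjBy_fromBlocks_upper lam u1 uT hU22)
    rwa [huT, Matrix.smul_mul, Matrix.smul_mul] at h
  · have h := SemiconjBy.of_isUnit_mul_eq ((isUnit_iff_isUnit_det _).2 hL) hLG
      (semiconjBy_fromBlocks_unitUpper hTQ) (semiconjBy_fromBlocks_lower mu l1 lv hL22)
    rwa [hlv, Matrix.mul_smul, ← Matrix.mul_assoc] at h

/-- The LU-gauge proposition: the gauge matrix `G` built from the LU decomposition
conjugates `A₀ = [[λ,0],[b,B]]` to an upper triangular matrix and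
`A₁ = [[μ,cᵀ],[0,C]]` to a lower triangular matrix, with the explicit block forms. -/
theorem LU_gauge (k : ℕ) (lam mu : ℂ)
    (b : Matrix (Fin k) (Fin 1) ℂ) (cT : Matrix (Fin 1) (Fin k) ℂ)
    (B C : Matrix (Fin k) (Fin k) ℂ)
    (hB : ∀ i j : Fin k, j < i → B i j = 0)
    (hC : ∀ i j : Fin k, i < j → C i j = 0)
    (hlamB : IsUnit (lam • (1 : Matrix (Fin k) (Fin k) ℂ) - B))
    (hmuC : IsUnit (mu • (1 : Matrix (Fin k) (Fin k) ℂ) - C))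
    (l1 u1 : ℂ) (lv : Matrix (Fin k) (Fin 1) ℂ) (uT : Matrix (Fin 1) (Fin k) ℂ)
    (L22 U22 : Matrix (Fin k) (Fin k) ℂ)
    (hL22 : ∀ i j : Fin k, i < j → L22 i j = 0)
    (hU22 : ∀ i j : Fin k, j < i → U22 i j = 0)
    (hl1 : l1 ≠ 0) (hU22unit : IsUnit U22)
    (hLU : fromBlocks (1 : Matrix (Fin 1) (Fin 1) ℂ)
          (cT * (mu • (1 : Matrix (Fin k) (Fin k) ℂ) - C)⁻¹) 0 1 *
        fromBlocks (1 : Matrix (Fin 1) (Fin 1) ℂ) 0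
          ((lam • (1 : Matrix (Fin k) (Fin k) ℂ) - B)⁻¹ * b) 1 =
        fromBlocks (l1 • (1 : Matrix (Fin 1) (Fin 1) ℂ)) 0 lv L22 *
        fromBlocks (u1 • (1 : Matrix (Fin 1) (Fin 1) ℂ)) uT 0 U22)
    (A0 A1 G : Matrix (Fin 1 ⊕ Fin k) (Fin 1 ⊕ Fin k) ℂ)
    (hA0 : A0 = fromBlocks (lam • (1 : Matrix (Fin 1) (Fin 1) ℂ)) 0 b B)
    (hA1 : A1 = fromBlocks (mu • (1 : Matrix (Fin 1) (Fin 1) ℂ)) cT 0 C)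
    (hG : G = fromBlocks (l1⁻¹ • (1 : Matrix (Fin 1) (Fin 1) ℂ)) 0 0 U22 *
        fromBlocks (1 : Matrix (Fin 1) (Fin 1) ℂ)
          (cT * (mu • (1 : Matrix (Fin k) (Fin k) ℂ) - C)⁻¹)
          (-((lam • (1 : Matrix (Fin k) (Fin k) ℂ) - B)⁻¹ * b)) 1) :
    G * A0 * G⁻¹ =
      fromBlocks (lam • (1 : Matrix (Fin 1) (Fin 1) ℂ))
        (-(l1⁻¹ • (cT * (mu • (1 : Matrix (Fin k) (Fin k) ℂ) - C)⁻¹ *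
            (lam • (1 : Matrix (Fin k) (Fin k) ℂ) - B) * U22⁻¹)))
        0 (U22 * B * U22⁻¹) ∧
    G * A1 * G⁻¹ =
      fromBlocks (mu • (1 : Matrix (Fin 1) (Fin 1) ℂ)) 0
        (-(u1⁻¹ • (L22⁻¹ * (mu • (1 : Matrix (Fin k) (Fin k) ℂ) - C) *
            (lam • (1 : Matrix (Fin k) (Fin k) ℂ) - B)⁻¹ * b)))
        (L22⁻¹ * C * L22) :=
  LU_gauge_general k lam mu b cT B C hlamB hmuC l1 u1 lv uT L22 U22 hLU A0 A1 G hA0 hA1 hG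
end
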